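/- Let C be a regular, irreducible curve that is projective over a field k, with function field F = k(C), arithmetic genus t ≥ 1, and a k-rational point O, and let S = { P in C : RR_{3t}((P)) ≠ {0} }. Assume the closed point P does not lie in S and d = deg(P) ≥ 2t + 1. Let e = ⌈(d+1)/2⌉ + t − 1, and let ε be an integer with e + 1 ≤ ε ≤ 3t. If a^+ and a^− are nonzero elements of RR_ε, then there exist nonzero b^+, b^− in RR_{ε−1} and g in RR_{3t}(D_P) such that a^− b^+ − a^+ b^− − f_P g = 0; in particular, {f_P, a^+} − {f_P, a^−} ≡ {f_P, b^+} − {f_P, b^−} modulo L_{3t} in K₂(F). -/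

import Mathlib

open scoped TensorProduct

noncomputable section

/-- The set of Steinberg relations in `Fˣ ⊗_ℤ Fˣ` (written additively):
the elements `a ⊗ b` with `a + b = 1` in `F`. -/
def SteinbergSet (F : Type*) [Field F] :
    Set (TensorProduct ℤ (Additive Fˣ) (Additive Fˣ)) :=
  { x | ∃ a b : Fˣ, (a : F) + (b : F) = 1 ∧
      x = Additive.ofMul a ⊗ₜ[ℤ] Additive.ofMul b }

/-- Milnor's `K₂` of a field, via Matsumoto's presentation. -/
abbrev K2 (F : Type*) [Field F] :=
  (TensorProduct ℤ (Additive Fˣ) (Additive Fˣ)) ⧸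
    Submodule.span ℤ (SteinbergSet F)

/-- The symbol `{f, g}` in `K₂(F)`. -/
def symbol {F : Type*} [Field F] (f g : Fˣ) : K2 F :=
  Submodule.Quotient.mk (Additive.ofMul f ⊗ₜ[ℤ] Additive.ofMul g)

/-- The degree of a divisor `D` on the curve: `∑_P deg(P) · D(P)`,
where `deg P = [k(P) : k]`. -/
def divDeg (k : Type*) [Field k] {Pt : Type*} (res : Pt → Type*)
    [∀ P, Field (res P)] [∀ P, Algebra k (res P)] (D : Pt →₀ ℤ) : ℤ :=
  ∑ᶠ P, (Module.finrank k (res P) : ℤ) * D P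

/-- Axioms for a regular, irreducible curve `C`, projective over a field `k`, with
`H⁰(C, O_C) = k`, presented through: its function field `F = k(C)`, its set `Pt` of
closed points, the residue fields `res P = k(P)`, the normalized valuations `ord P`,
the evaluation maps `ev P` (evaluation at `P` of functions regular at `P`), the
Riemann-Roch spaces `L D = H⁰(C, O_C(D))`, and the arithmetic genus
`t = dim_k H¹(C, O_C)`, characterized by the Riemann-Roch relations. -/
structure IsProjCurve (k F : Type*) [Field k] [Field F] [Algebra k F]
    {Pt : Type*} (res : Pt → Type*) [∀ P, Field (res P)] [∀ P, Algebra k (res P)]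
    (ord : Pt → F → ℤ) (ev : ∀ P, F → res P)
    (L : (Pt →₀ ℤ) → Submodule k F) (t : ℕ) : Prop where
  finiteDimensional_res : ∀ P, FiniteDimensional k (res P)
  ord_mul : ∀ P (f g : F), f ≠ 0 → g ≠ 0 → ord P (f * g) = ord P f + ord P g
  ord_add : ∀ P (f g : F), f ≠ 0 → g ≠ 0 → f + g ≠ 0 →
      min (ord P f) (ord P g) ≤ ord P (f + g)
  ord_algebraMap : ∀ P (c : k), c ≠ 0 → ord P (algebraMap k F c) = 0
  ord_uniformizer : ∀ P, ∃ f : F, f ≠ 0 ∧ ord P f = 1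
  ord_separates : ∀ P Q, (∀ f : F, ord P f = ord Q f) → P = Q
  support_finite : ∀ f : F, f ≠ 0 → {P | ord P f ≠ 0}.Finite
  degree_formula : ∀ f : F, f ≠ 0 →
      ∑ᶠ P, (Module.finrank k (res P) : ℤ) * ord P f = 0
  ev_zero : ∀ P, ev P 0 = 0
  ev_one : ∀ P, ev P 1 = 1
  ev_add : ∀ P (f g : F), f ≠ 0 → g ≠ 0 → 0 ≤ ord P f → 0 ≤ ord P g →
      ev P (f + g) = ev P f + ev P g
  ev_mul : ∀ P (f g : F), f ≠ 0 → g ≠ 0 → 0 ≤ ord P f → 0 ≤ ord P g →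
      ev P (f * g) = ev P f * ev P g
  ev_algebraMap : ∀ P (c : k), ev P (algebraMap k F c) = algebraMap k (res P) c
  ev_eq_zero_iff : ∀ P (f : F), f ≠ 0 → 0 ≤ ord P f → (ev P f = 0 ↔ 0 < ord P f)
  ev_surjective : ∀ P (y : res P), ∃ f : F, f ≠ 0 ∧ 0 ≤ ord P f ∧ ev P f = y
  mem_L : ∀ (D : Pt →₀ ℤ) (f : F), f ∈ L D ↔ (f ≠ 0 → ∀ P, 0 ≤ D P + ord P f)
  finiteDimensional_L : ∀ D, FiniteDimensional k (L D)
  global_sections : ∀ f : F, f ∈ L 0 ↔ ∃ c : k, algebraMap k F c = f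
  rr_ineq : ∀ D : Pt →₀ ℤ,
      divDeg k res D + 1 - t ≤ (Module.finrank k (L D) : ℤ)
  rr_eq : ∀ D : Pt →₀ ℤ, 2 * (t : ℤ) - 2 < divDeg k res D →
      (Module.finrank k (L D) : ℤ) = divDeg k res D + 1 - t

/-- `T` is the tame symbol `K₂(F) → ∐_{P} k(P)^*`: it is determined by
`T_P({f,g}) = (-1)^{ord_P(f)·ord_P(g)} (f^{ord_P(g)} / g^{ord_P(f)})(P)`. -/
def IsTameSymbol {F : Type*} [Field F] {Pt : Type*} {res : Pt → Type*}
    [∀ P, Field (res P)]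
    (ord : Pt → F → ℤ) (ev : ∀ P, F → res P)
    (T : K2 F →+ Π₀ P : Pt, Additive ((res P)ˣ)) : Prop :=
  ∀ (f g : Fˣ) (P : Pt),
    ((Additive.toMul (T (symbol f g) P) : (res P)ˣ) : res P) =
      ev P (((-1 : Fˣ) ^ (ord P (f : F) * ord P (g : F)) *
        f ^ (ord P (g : F)) * g ^ (-ord P (f : F)) : Fˣ) : F)

/-- `L_d`: the subgroup of `K₂(F)` generated by the symbols `{l, m}` with `l, m`
nonzero elements of the Riemann-Roch space `H⁰(C, O_C(d(O)))`. -/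
def Lsub {k F : Type*} [Field k] [Field F] [Algebra k F] {Pt : Type*}
    (L : (Pt →₀ ℤ) → Submodule k F) (O : Pt) (d : ℤ) : AddSubgroup (K2 F) :=
  AddSubgroup.closure
    { x | ∃ l m : Fˣ, (l : F) ∈ L (Finsupp.single O d) ∧
        (m : F) ∈ L (Finsupp.single O d) ∧ x = symbol l m }

/-!
Write `A = RR_{ε-1}`, `G = RR_{3t}(D_P)` and `W = RR_{2ε-1}`. The map
`(b⁺, b⁻, g) ↦ a⁻ b⁺ - a⁺ b⁻ - f_P g` sends `A × A × G` into `W`, because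
`2ε - 1 ≥ d + 2t` is exactly the bound `ε ≥ e + 1`. By Riemann–Roch the source has dimension
`2(ε - t) + (t + 1)` and the target `2ε - t`, so the map has a nonzero kernel element. Since
`P ∉ S`, every nonzero element of `RR_{3t}` is a unit at `P`, while `f_P g` vanishes at `P`;
comparing valuations at `P` forces `b⁺ ≠ 0` and `b⁻ ≠ 0`. Finally, putting
`u = a⁺ b⁻ / (a⁻ b⁺)` and `v = f_P g / (a⁻ b⁺)`, the relation reads `u + v = 1`, and the Steinberg
relation `{v, u} = 0` rewrites `{f_P, u}`, which is the difference of symbols in question, as a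
combination of symbols of elements of `RR_{3t}`.
-/

section Symbol

variable {F : Type*} [Field F]

theorem symbol_mul_left (f g h : Fˣ) : symbol (f * g) h = symbol f h + symbol g h := by
  rw [symbol, symbol, symbol, ← Submodule.Quotient.mk_add, ofMul_mul, TensorProduct.add_tmul]

theorem symbol_mul_right (f g h : Fˣ) : symbol f (g * h) = symbol f g + symbol f h := by
  rw [symbol, symbol, symbol, ← Submodule.Quotient.mk_add, ofMul_mul, TensorProduct.tmul_add]

theorem symbol_inv_left (f g : Fˣ) : symbol f⁻¹ g = -symbol f g := by
  rw [symbol, symbol, ← Submodule.Quotient.mk_neg, ofMul_inv, TensorProduct.neg_tmul]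

theorem symbol_inv_right (f g : Fˣ) : symbol f g⁻¹ = -symbol f g := by
  rw [symbol, symbol, ← Submodule.Quotient.mk_neg, ofMul_inv, TensorProduct.tmul_neg]

theorem symbol_one_left (g : Fˣ) : symbol (1 : Fˣ) g = 0 := by
  rw [symbol, ofMul_one, TensorProduct.zero_tmul, Submodule.Quotient.mk_zero]

theorem symbol_one_right (f : Fˣ) : symbol f (1 : Fˣ) = 0 := by
  rw [symbol, ofMul_one, TensorProduct.tmul_zero, Submodule.Quotient.mk_zero]

theorem symbol_eq_zero_of_add_eq_one {a b : Fˣ} (h : (a : F) + (b : F) = 1) : symbol a b = 0 :=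
  (Submodule.Quotient.mk_eq_zero _).2 (Submodule.subset_span ⟨a, b, h, rfl⟩)

theorem symbol_mem_of_mem_closure {H : AddSubgroup (K2 F)} {S : Set Fˣ}
    (hS : ∀ x ∈ S, ∀ y ∈ S, symbol x y ∈ H) {x y : Fˣ}
    (hx : x ∈ Subgroup.closure S) (hy : y ∈ Subgroup.closure S) : symbol x y ∈ H := by
  induction hx, hy using Subgroup.closure_induction₂ with
  | mem x y hx hy => exact hS x hx y hy
  | one_left y _ => simpa only [symbol_one_left] using H.zero_mem
  | one_right x _ => simpa only [symbol_one_right] using H.zero_mem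
  | mul_left x y z _ _ _ hxz hyz => simpa only [symbol_mul_left] using H.add_mem hxz hyz
  | mul_right y z x _ _ _ hxy hxz => simpa only [symbol_mul_right] using H.add_mem hxy hxz
  | inv_left x y _ _ hxy => simpa only [symbol_inv_left] using H.neg_mem hxy
  | inv_right x y _ _ hxy => simpa only [symbol_inv_right] using H.neg_mem hxy

theorem symbol_sub_symbol_mem_of_mul_sub_mul_eq {H : AddSubgroup (K2 F)} {S : Set F}
    (hS : ∀ x y : Fˣ, (x : F) ∈ S → (y : F) ∈ S → symbol x y ∈ H)
    {f ap am bp bm : Fˣ} {g : F} (hap : (ap : F) ∈ S) (ham : (am : F) ∈ S)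
    (hbp : (bp : F) ∈ S) (hbm : (bm : F) ∈ S) (hg : g ∈ S)
    (h : (am : F) * bp - ap * bm = f * g) :
    symbol f ap - symbol f am - (symbol f bp - symbol f bm) ∈ H := by
  set T : Subgroup Fˣ := Subgroup.closure (Units.val ⁻¹' S)
  have hT : ∀ {x : Fˣ}, (x : F) ∈ S → x ∈ T := fun hx => Subgroup.subset_closure hx
  set u := ap * bm * (am * bp)⁻¹ with hu
  have huT : u ∈ T :=
    T.mul_mem (T.mul_mem (hT hap) (hT hbm)) (T.inv_mem (T.mul_mem (hT ham) (hT hbp)))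
  have hsymbol : symbol f ap - symbol f am - (symbol f bp - symbol f bm) = symbol f u := by
    rw [hu, symbol_mul_right, symbol_mul_right, symbol_inv_right, symbol_mul_right]
    abel
  rw [hsymbol]
  rcases eq_or_ne g 0 with rfl | hg0
  · have hu1 : u = 1 := by
      rw [mul_zero, sub_eq_zero] at h
      rw [hu, mul_inv_eq_one]
      ext
      simpa using h.symm
    rw [hu1, symbol_one_right]
    exact H.zero_mem
  · set w := am * bp * (Units.mk0 g hg0)⁻¹
    have hwT : w ∈ T := T.mul_mem (T.mul_mem (hT ham) (hT hbp)) (T.inv_mem (hT hg))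
    have hvu : ((f * w⁻¹ : Fˣ) : F) + u = 1 := by
      simp only [w, hu, Units.val_mul, Units.val_inv_eq_inv_val, Units.val_mk0]
      field_simp
      linear_combination -h
    rw [show f = f * w⁻¹ * w by group, symbol_mul_left, symbol_eq_zero_of_add_eq_one hvu,
      zero_add]
    exact symbol_mem_of_mem_closure (fun x hx y hy => hS x y hx hy) hwT huT

end Symbol

theorem symbol_mem_Lsub {k F : Type*} [Field k] [Field F] [Algebra k F] {Pt : Type*}
    {L : (Pt →₀ ℤ) → Submodule k F} {O : Pt} {n : ℤ} {x y : Fˣ}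
    (hx : (x : F) ∈ L (Finsupp.single O n)) (hy : (y : F) ∈ L (Finsupp.single O n)) :
    symbol x y ∈ Lsub L O n :=
  AddSubgroup.subset_closure ⟨x, y, hx, hy, rfl⟩

theorem natCast_add_one_le_two_mul_ceil (n : ℕ) : (n : ℤ) + 1 ≤ 2 * ⌈((n : ℚ) + 1) / 2⌉ := by
  have h := Int.le_ceil (((n : ℚ) + 1) / 2)
  exact_mod_cast (by linarith : ((n : ℚ) + 1) ≤ 2 * ⌈((n : ℚ) + 1) / 2⌉)

theorem exists_mul_sub_mul_eq_mul_of_finrank_lt {k R : Type*} [Field k] [CommRing R]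
    [Algebra k R] {A G W : Submodule k R} [FiniteDimensional k A] [FiniteDimensional k G]
    [FiniteDimensional k W] {a a' f : R} (ha : ∀ b ∈ A, a * b ∈ W) (ha' : ∀ b ∈ A, a' * b ∈ W)
    (hf : ∀ g ∈ G, f * g ∈ W)
    (hdim : Module.finrank k W < 2 * Module.finrank k A + Module.finrank k G) :
    ∃ b ∈ A, ∃ b' ∈ A, ∃ g ∈ G, (b ≠ 0 ∨ b' ≠ 0 ∨ g ≠ 0) ∧ a * b - a' * b' = f * g := by
  let φ : A × A × G →ₗ[k] W := ((LinearMap.mulLeft k a).restrict ha).coprod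
    ((-(LinearMap.mulLeft k a').restrict ha').coprod (-(LinearMap.mulLeft k f).restrict hf))
  have hker : LinearMap.ker φ ≠ ⊥ := LinearMap.ker_ne_bot_of_finrank_lt <| by
    rw [Module.finrank_prod, Module.finrank_prod]
    omega
  obtain ⟨⟨⟨b, hb⟩, ⟨b', hb'⟩, ⟨g, hg⟩⟩, hφ, hne⟩ := (Submodule.ne_bot_iff _).1 hker
  refine ⟨b, hb, b', hb', g, hg, ?_, ?_⟩
  · contrapose! hne
    obtain ⟨rfl, rfl, rfl⟩ := hne
    rfl
  · have hφ0 : a * b + (-(a' * b') + -(f * g)) = 0 :=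
      congrArg Subtype.val (LinearMap.mem_ker.1 hφ)
    linear_combination hφ0

section divDeg

variable {k : Type*} [Field k] {Pt : Type*} {res : Pt → Type*} [∀ P, Field (res P)]
  [∀ P, Algebra k (res P)]

theorem divDeg_single (Q : Pt) (n : ℤ) :
    divDeg k res (Finsupp.single Q n) = Module.finrank k (res Q) * n := by
  rw [divDeg, finsum_eq_single _ Q fun P hP => by rw [Finsupp.single_eq_of_ne' (Ne.symm hP),
    mul_zero], Finsupp.single_eq_same]

theorem finite_support_divDeg_summand (D : Pt →₀ ℤ) :
    (Function.support fun Q => (Module.finrank k (res Q) : ℤ) * D Q).Finite :=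
  Set.Finite.subset D.hasFiniteSupport (Function.support_mul_subset_right _ _)

theorem divDeg_sub (D₁ D₂ : Pt →₀ ℤ) :
    divDeg k res (D₁ - D₂) = divDeg k res D₁ - divDeg k res D₂ := by
  simp only [divDeg, Finsupp.sub_apply, mul_sub]
  exact finsum_sub_distrib (finite_support_divDeg_summand D₁) (finite_support_divDeg_summand D₂)

theorem apply_eq_zero_of_divDeg_lt {D : Pt →₀ ℤ} (hD : ∀ Q, 0 ≤ D Q) {P : Pt}
    (h : divDeg k res D < Module.finrank k (res P)) : D P = 0 := by
  have hP : (Module.finrank k (res P) : ℤ) * D P ≤ divDeg k res D :=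
    single_le_finsum P (finite_support_divDeg_summand D) fun Q =>
      mul_nonneg (by positivity) (hD Q)
  nlinarith [hD P]

end divDeg

namespace IsProjCurve

variable {k F : Type*} [Field k] [Field F] [Algebra k F] {Pt : Type*} {res : Pt → Type*}
  [∀ P, Field (res P)] [∀ P, Algebra k (res P)] {ord : Pt → F → ℤ} {ev : ∀ P, F → res P}
  {L : (Pt →₀ ℤ) → Submodule k F} {t : ℕ}

theorem L_mono (hC : IsProjCurve k F res ord ev L t) {D₁ D₂ : Pt →₀ ℤ} (h : D₁ ≤ D₂) :
    L D₁ ≤ L D₂ := by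
  intro x hx
  rw [hC.mem_L] at hx ⊢
  exact fun hx0 Q => (hx hx0 Q).trans (by linarith [h Q])

theorem mul_mem_L (hC : IsProjCurve k F res ord ev L t) {D₁ D₂ : Pt →₀ ℤ} {x y : F}
    (hx : x ∈ L D₁) (hy : y ∈ L D₂) : x * y ∈ L (D₁ + D₂) := by
  rw [hC.mem_L] at hx hy ⊢
  intro hxy Q
  have hx0 : x ≠ 0 := left_ne_zero_of_mul hxy
  have hy0 : y ≠ 0 := right_ne_zero_of_mul hxy
  rw [hC.ord_mul Q x y hx0 hy0, Finsupp.add_apply]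
  linarith [hx hx0 Q, hy hy0 Q]

theorem mem_L_neg (hC : IsProjCurve k F res ord ev L t) {x : F} {D : Pt →₀ ℤ}
    (h : ∀ Q, ord Q x = D Q) : x ∈ L (-D) := by
  rw [hC.mem_L]
  intro _ Q
  rw [h Q, Finsupp.neg_apply, neg_add_cancel]

theorem mul_mem_L_single_sub_single (hC : IsProjCurve k F res ord ev L t) {P O : Pt}
    {D : Pt →₀ ℤ} {m n : ℤ} {f g : F}
    (hf : ∀ Q, ord Q f = (Finsupp.single P 1 - D - m • Finsupp.single O 1 : Pt →₀ ℤ) Q)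
    (hg : g ∈ L (Finsupp.single O n - D)) :
    f * g ∈ L (Finsupp.single O (m + n) - Finsupp.single P 1) := by
  classical
  convert hC.mul_mem_L (hC.mem_L_neg hf) hg using 2
  ext Q
  simp only [Finsupp.sub_apply, Finsupp.add_apply, Finsupp.neg_apply, Finsupp.smul_apply,
    smul_eq_mul, Finsupp.single_apply]
  split_ifs <;> omega

theorem ord_neg (hC : IsProjCurve k F res ord ev L t) (P : Pt) {x : F} (hx : x ≠ 0) :
    ord P (-x) = ord P x := by
  have h1 : (-1 : k) ≠ 0 := neg_ne_zero.2 one_ne_zero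
  rw [← neg_one_mul, show (-1 : F) = algebraMap k F (-1) by simp,
    hC.ord_mul P _ x ((map_ne_zero _).2 h1) hx, hC.ord_algebraMap P _ h1, zero_add]

theorem ord_eq_zero_of_L_sub_single_eq_bot (hC : IsProjCurve k F res ord ev L t)
    {D : Pt →₀ ℤ} {P : Pt} (hDP : D P = 0) (hbot : L (D - Finsupp.single P 1) = ⊥) {x : F}
    (hx : x ∈ L D) (hx0 : x ≠ 0) : ord P x = 0 := by
  have hle := (hC.mem_L D x).1 hx hx0
  refine le_antisymm ?_ (by simpa [hDP] using hle P)
  by_contra! hpos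
  refine hx0 ((Submodule.mem_bot k).1 (hbot ▸ (hC.mem_L _ x).2 fun _ Q => ?_))
  by_cases hQ : Q = P
  · subst hQ
    simp [hDP]
    omega
  · simpa [Finsupp.single_eq_of_ne' (Ne.symm hQ)] using hle Q

theorem ord_pos_of_mem_L_sub_single (hC : IsProjCurve k F res ord ev L t)
    {D : Pt →₀ ℤ} {P : Pt} (hDP : D P = 0) {x : F} (hx : x ∈ L (D - Finsupp.single P 1))
    (hx0 : x ≠ 0) : 0 < ord P x := by
  have := (hC.mem_L _ x).1 hx hx0 P
  simp only [Finsupp.sub_apply, hDP, Finsupp.single_eq_same] at this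
  omega

theorem ne_zero_of_mul_sub_mul_eq (hC : IsProjCurve k F res ord ev L t) {P : Pt} {M : Set F}
    (hM : ∀ x ∈ M, x ≠ 0 → ord P x = 0) {a a' b b' y : F} (ha : a ∈ M) (ha' : a' ∈ M)
    (hb : b ∈ M) (hb' : b' ∈ M) (ha0 : a ≠ 0) (ha'0 : a' ≠ 0) (hy : y ≠ 0 → 0 < ord P y)
    (h : a * b - a' * b' = y) (hnt : b ≠ 0 ∨ b' ≠ 0 ∨ y ≠ 0) : b ≠ 0 ∧ b' ≠ 0 := by
  have hprod : ∀ {x z : F}, x ∈ M → z ∈ M → x ≠ 0 → z ≠ 0 → x * z ≠ y ∧ -(x * z) ≠ y := by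
    intro x z hx hz hx0 hz0
    have hxz0 := mul_ne_zero hx0 hz0
    have hxz : ord P (x * z) = 0 := by
      rw [hC.ord_mul P x z hx0 hz0, hM x hx hx0, hM z hz hz0, add_zero]
    constructor <;> rintro rfl
    · linarith [hy hxz0]
    · linarith [hy (neg_ne_zero.2 hxz0), hC.ord_neg P hxz0]
  constructor
  · rintro rfl
    have hb'0 : b' ≠ 0 := by
      rintro rfl
      simp only [mul_zero, sub_zero] at h
      simp [← h] at hnt
    exact (hprod ha' hb' ha'0 hb'0).2 (by rw [← h]; ring)
  · rintro rfl
    have hb0 : b ≠ 0 := by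
      rintro rfl
      simp only [mul_zero, sub_zero] at h
      simp [← h] at hnt
    exact (hprod ha hb ha0 hb0).1 (by rw [← h]; ring)

theorem exists_mul_sub_mul_eq_mul (hC : IsProjCurve k F res ord ev L t) {O : Pt}
    (hO : Module.finrank k (res O) = 1) {D : Pt →₀ ℤ} (hD : divDeg k res D = t) {ε : ℤ}
    (hε : 2 * (t : ℤ) + 1 ≤ ε) {a a' f : F} (ha : a ∈ L (Finsupp.single O ε))
    (ha' : a' ∈ L (Finsupp.single O ε))
    (hf : ∀ g ∈ L (Finsupp.single O (3 * t : ℤ) - D), f * g ∈ L (Finsupp.single O (2 * ε - 1))) :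
    ∃ b ∈ L (Finsupp.single O (ε - 1)), ∃ b' ∈ L (Finsupp.single O (ε - 1)),
      ∃ g ∈ L (Finsupp.single O (3 * t : ℤ) - D),
        (b ≠ 0 ∨ b' ≠ 0 ∨ g ≠ 0) ∧ a * b - a' * b' = f * g := by
  have := hC.finiteDimensional_L
  have hmul : ∀ x ∈ L (Finsupp.single O ε), ∀ b ∈ L (Finsupp.single O (ε - 1)),
      x * b ∈ L (Finsupp.single O (2 * ε - 1)) := fun x hx b hb => by
    rw [show 2 * ε - 1 = ε + (ε - 1) by ring, Finsupp.single_add]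
    exact hC.mul_mem_L hx hb
  refine exists_mul_sub_mul_eq_mul_of_finrank_lt (hmul a ha) (hmul a' ha') hf ?_
  have hdeg : ∀ n, divDeg k res (Finsupp.single O n) = n := fun n => by
    rw [divDeg_single, hO, Nat.cast_one, one_mul]
  have hrkA := hC.rr_eq (Finsupp.single O (ε - 1)) (by rw [hdeg]; omega)
  have hrkW := hC.rr_eq (Finsupp.single O (2 * ε - 1)) (by rw [hdeg]; omega)
  have hrkG := hC.rr_eq (Finsupp.single O (3 * t : ℤ) - D) (by rw [divDeg_sub, hdeg]; omega)
  rw [hdeg] at hrkA hrkW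
  rw [divDeg_sub, hdeg, hD] at hrkG
  omega

end IsProjCurve

/-- Lemma `flemma`.  Let `C` be a regular, irreducible curve,
projective over `k`, with function field `F`, arithmetic genus `t ≥ 1` and a
`k`-rational point `O`; let `S = {P : RR_{3t}((P)) ≠ 0}`.  Assume `P ∉ S`,
`d = deg(P) ≥ 2t + 1`, let `e = ⌈(d+1)/2⌉ + t - 1`, and let `e + 1 ≤ ε ≤ 3t`.
If `a⁺, a⁻` are nonzero elements of `RR_ε`, then there are nonzero `b⁺, b⁻` in
`RR_{ε-1}` and `g ∈ RR_{3t}(D_P)` with `a⁻ b⁺ - a⁺ b⁻ - f_P g = 0`; in particular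
`{f_P, a⁺} - {f_P, a⁻} ≡ {f_P, b⁺} - {f_P, b⁻}` modulo `L_{3t}`. -/
theorem statement16 (k F : Type*) [Field k] [Field F] [Algebra k F]
    {Pt : Type*} (res : Pt → Type*) [∀ P, Field (res P)] [∀ P, Algebra k (res P)]
    (ord : Pt → F → ℤ) (ev : ∀ P, F → res P)
    (L : (Pt →₀ ℤ) → Submodule k F) (t : ℕ) (ht : 1 ≤ t)
    (hC : IsProjCurve k F res ord ev L t)
    (O : Pt) (hO : Module.finrank k (res O) = 1)
    (P : Pt)
    (hPS : L (Finsupp.single O (3 * t : ℤ) - Finsupp.single P 1) = ⊥)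
    (d : ℕ) (hd : d = Module.finrank k (res P)) (hd1 : 2 * t + 1 ≤ d)
    (fP : Fˣ) (DP : Pt →₀ ℤ)
    (hDPeff : ∀ Q, 0 ≤ DP Q) (hDPdeg : divDeg k res DP = t)
    (hfP : ∀ Q, ord Q (fP : F) =
      ((Finsupp.single P 1 - DP - ((d : ℤ) - t) • Finsupp.single O 1 : Pt →₀ ℤ)) Q)
    (e : ℤ) (he : e = ⌈((d : ℚ) + 1) / 2⌉ + t - 1)
    (ε : ℤ) (hε1 : e + 1 ≤ ε) (hε2 : ε ≤ 3 * t)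
    (ap am : Fˣ)
    (hap : (ap : F) ∈ L (Finsupp.single O ε))
    (ham : (am : F) ∈ L (Finsupp.single O ε)) :
    ∃ bp bm : Fˣ,
      (bp : F) ∈ L (Finsupp.single O (ε - 1)) ∧
      (bm : F) ∈ L (Finsupp.single O (ε - 1)) ∧
      ∃ g ∈ L (Finsupp.single O (3 * t : ℤ) - DP),
        (am : F) * bp - (ap : F) * bm - (fP : F) * g = 0 ∧
        symbol fP ap - symbol fP am - (symbol fP bp - symbol fP bm) ∈
          Lsub L O (3 * t : ℤ) := by
  classical
  have hPO : P ≠ O := by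
    rintro rfl
    omega
  have hε : (d : ℤ) + 2 * t + 1 ≤ 2 * ε := by
    have := natCast_add_one_le_two_mul_ceil d
    omega
  have hDP : DP P = 0 := apply_eq_zero_of_divDeg_lt hDPeff (by rw [hDPdeg, ← hd]; omega)
  have hfPg : ∀ g ∈ L (Finsupp.single O (3 * t : ℤ) - DP),
      (fP : F) * g ∈ L (Finsupp.single O ((d : ℤ) - t + 3 * t) - Finsupp.single P 1) :=
    fun g hg => hC.mul_mem_L_single_sub_single hfP hg
  obtain ⟨bp, hbp, bm, hbm, g, hg, hnt, hrel⟩ := hC.exists_mul_sub_mul_eq_mul hO hDPdeg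
    (by omega) ham hap fun g hg => hC.L_mono (fun Q => by
      simp only [Finsupp.sub_apply, Finsupp.single_apply]; split_ifs <;> omega) (hfPg g hg)
  have hle3t : ∀ {n : ℤ}, n ≤ 3 * t → L (Finsupp.single O n) ≤ L (Finsupp.single O (3 * t : ℤ)) :=
    fun hn => hC.L_mono (Finsupp.single_le_single.2 hn)
  obtain ⟨hbp0, hbm0⟩ := hC.ne_zero_of_mul_sub_mul_eq
    (fun x hx hx0 => hC.ord_eq_zero_of_L_sub_single_eq_bot (Finsupp.single_eq_of_ne hPO) hPS hx hx0)
    (hle3t hε2 ham) (hle3t hε2 hap) (hle3t (by omega) hbp) (hle3t (by omega) hbm)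
    am.ne_zero ap.ne_zero
    (hC.ord_pos_of_mem_L_sub_single (Finsupp.single_eq_of_ne hPO) (hfPg g hg)) hrel
    (hnt.imp_right (Or.imp_right (mul_ne_zero fP.ne_zero)))
  refine ⟨Units.mk0 bp hbp0, Units.mk0 bm hbm0, hbp, hbm, g, hg, sub_eq_zero.2 hrel, ?_⟩
  exact symbol_sub_symbol_mem_of_mul_sub_mul_eq (fun x y => symbol_mem_Lsub) (hle3t hε2 hap)
    (hle3t hε2 ham) (hle3t (by omega) hbp) (hle3t (by omega) hbm)
    (hC.L_mono (fun Q => by simpa using hDPeff Q) hg) hrel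

end
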